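/- arXiv:2305.07295 — 4 statements merged into one kernel-verified Lean document; each statement's English description precedes it below -/
import Mathlib

section
/- Let δ ≥ 0 be a real number, n a natural number, a : Fin n → ℝ a sequence, and P : Fin n → Prop a decidable predicate. Suppose that for every i : Fin n, if the set {j : Fin n | j < i ∧ P j} is empty then a i ≤ δ, and otherwise a i ≤ δ + max { a j | j < i ∧ P j }. Then for every i : Fin n, a i ≤ δ · ((card {j | j < i ∧ P j}) + 1). In particular, a i ≤ δ · (k + 1) for all i, where k = card {j : Fin n | P j}. -/
/-!
Strong induction along the order: if `j < i` is a guard, the guards below `j` are guards below `i`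
other than `j` itself, so there are strictly fewer of them. Hence `a j ≤ δ · #{guards below i}` for
every guard `j < i`, and the hypothesis adds one more `δ` for `a i`; this needs `0 ≤ δ`.
-/

open Finset

section

variable {ι : Type*} [Preorder ι] [Fintype ι] [DecidableLT ι] {P : ι → Prop} [DecidablePred P]

theorem card_filter_lt_add_one_le {i j : ι} (hji : j < i) (hPj : P j) :
    #{k | k < j ∧ P k} + 1 ≤ #{k | k < i ∧ P k} := by
  refine card_lt_card <| (ssubset_iff_of_subset fun k hk => ?_).2 ⟨j, ?_, ?_⟩
  · simp only [mem_filter, mem_univ, true_and] at hk ⊢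
    exact ⟨hk.1.trans hji, hk.2⟩
  · simp [hji, hPj]
  · simp

theorem le_mul_card_filter_lt_add_one {δ : ℝ} (hδ : 0 ≤ δ) {a : ι → ℝ}
    (h0 : ∀ i, ({j | j < i ∧ P j} : Finset ι) = ∅ → a i ≤ δ)
    (h1 : ∀ i, ∀ h : ({j | j < i ∧ P j} : Finset ι).Nonempty,
      a i ≤ δ + ({j | j < i ∧ P j} : Finset ι).sup' h a)
    (i : ι) : a i ≤ δ * (#{j | j < i ∧ P j} + 1 : ℝ) := by
  induction i using WellFoundedLT.induction with
  | ind i ih =>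
    rcases ({j | j < i ∧ P j} : Finset ι).eq_empty_or_nonempty with hempty | hne
    · simpa [hempty] using h0 i hempty
    · have hguards : ∀ j ∈ ({j | j < i ∧ P j} : Finset ι), a j ≤ δ * #{j | j < i ∧ P j} := by
        intro j hj
        obtain ⟨hji, hPj⟩ := (mem_filter.1 hj).2
        calc a j ≤ δ * (#{k | k < j ∧ P k} + 1 : ℝ) := ih j hji
          _ ≤ δ * #{k | k < i ∧ P k} := by
            gcongr
            exact_mod_cast card_filter_lt_add_one_le hji hPj
      linarith [h1 i hne, sup'_le hne a hguards]

end

theorem stmt_3 (δ : ℝ) (hδ : 0 ≤ δ) (n : ℕ) (a : Fin n → ℝ)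
    (P : Fin n → Prop) [DecidablePred P]
    (h0 : ∀ i : Fin n, (Finset.univ.filter (fun j => j < i ∧ P j)) = ∅ → a i ≤ δ)
    (h1 : ∀ i : Fin n, ∀ h : (Finset.univ.filter (fun j => j < i ∧ P j)).Nonempty,
      a i ≤ δ + (Finset.univ.filter (fun j => j < i ∧ P j)).sup' h a) :
    (∀ i : Fin n,
      a i ≤ δ * (((Finset.univ.filter (fun j => j < i ∧ P j)).card : ℝ) + 1)) ∧
    (∀ i : Fin n, a i ≤ δ * (((Finset.univ.filter (fun j => P j)).card : ℝ) + 1)) := by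
  have hbound := le_mul_card_filter_lt_add_one hδ h0 h1
  refine ⟨hbound, fun i => (hbound i).trans ?_⟩
  gcongr
  exact And.right
end

section
/- Let (Q, q̂, E) and (Q, q̂, E') be guarded weighted graphs over the same locations and with the same edges (same sources, targets, and weights), except that for each edge e the guard in E' satisfies guard'(e) ∈ {guard(e), none} (i.e., E' is obtained from E by erasing some guards). Let F and F' be the corresponding operators on Q → ℝ≥0∞. Then F'(T) ≤ F(T) pointwise for every T : Q → ℝ≥0∞, and consequently the least fixed point of F' is pointwise ≤ the least fixed point of F, and the greatest fixed point of F' is pointwise ≤ the greatest fixed point of F. -/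
open scoped ENNReal

/-- Guard threshold: `0` for an unguarded edge, `T g` for an edge guarded by `g`. -/
def theta {Q E : Type*} (guard : E → Option Q) (T : Q → ℝ≥0∞) (e : E) : ℝ≥0∞ :=
  (guard e).elim 0 T

/-- The minimal-reachability-time operator of a guarded weighted graph. -/
noncomputable def Fop {Q E : Type*} [DecidableEq Q] (qhat : Q) (src tgt : E → Q)
    (w : E → NNReal) (guard : E → Option Q) (T : Q → ℝ≥0∞) : Q → ℝ≥0∞ :=
  fun q => if q = qhat then 0
    else ⨅ e : { e : E // tgt e = q },
      max (T (src e.1) + (w e.1 : ℝ≥0∞)) (theta guard T e.1)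

/-! Erasing a guard replaces its threshold `T g` by `0`, so it lowers every term of the infimum
and `F' ≤ F`. Both operators are monotone on the complete lattice `Q → ℝ≥0∞`, so by
Knaster–Tarski `lfp F'` lies below the pre-fixed point `lfp F` of `F'`, and every fixed point of
`F'` is a post-fixed point of `F`, hence lies below `gfp F`. -/

section FixedPoints

variable {α : Type*} [CompleteLattice α]

theorem IsLeast.le_of_map_le {g : α → α} (hg : Monotone g) {b a : α}
    (hb : IsLeast {x | g x = x} b) (ha : g a ≤ a) : b ≤ a :=
  (hb.2 (OrderHom.map_lfp ⟨g, hg⟩)).trans (OrderHom.lfp_le ⟨g, hg⟩ ha)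

theorem IsGreatest.le_of_le_map {f : α → α} (hf : Monotone f) {a b : α}
    (ha : IsGreatest {x | f x = x} a) (hb : b ≤ f b) : b ≤ a :=
  (OrderHom.le_gfp ⟨f, hf⟩ hb).trans (ha.2 (OrderHom.map_gfp ⟨f, hf⟩))

end FixedPoints

section GuardedGraph

variable {Q E : Type*}

theorem theta_mono (guard : E → Option Q) {T T' : Q → ℝ≥0∞} (h : T ≤ T') (e : E) :
    theta guard T e ≤ theta guard T' e := by
  cases hg : guard e <;> simp [theta, hg, h _]

theorem theta_le_of_erase {guard guard' : E → Option Q} {e : E}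
    (herase : guard' e = guard e ∨ guard' e = none) (T : Q → ℝ≥0∞) :
    theta guard' T e ≤ theta guard T e := by
  rcases herase with h | h <;> simp [theta, h]

variable [DecidableEq Q] (qhat : Q) (src tgt : E → Q) (w : E → NNReal)

theorem Fop_le_Fop {guard guard' : E → Option Q} {T T' : Q → ℝ≥0∞} (hT : T ≤ T')
    (hθ : ∀ e, theta guard' T e ≤ theta guard T' e) :
    Fop qhat src tgt w guard' T ≤ Fop qhat src tgt w guard T' := by
  intro q
  unfold Fop
  split_ifs
  · exact le_rfl
  · exact iInf_mono fun e => max_le_max (add_le_add_left (hT _) _) (hθ e.1)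

theorem Fop_mono (guard : E → Option Q) : Monotone (Fop qhat src tgt w guard) :=
  fun _ _ h => Fop_le_Fop qhat src tgt w h (theta_mono guard h)

theorem Fop_le_of_erase {guard guard' : E → Option Q}
    (herase : ∀ e, guard' e = guard e ∨ guard' e = none) (T : Q → ℝ≥0∞) :
    Fop qhat src tgt w guard' T ≤ Fop qhat src tgt w guard T :=
  Fop_le_Fop qhat src tgt w le_rfl fun e => theta_le_of_erase (herase e) T

end GuardedGraph

theorem stmt_10_general {Q E : Type*} [DecidableEq Q]
    (qhat : Q) (src tgt : E → Q) (w : E → NNReal)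
    (guard guard' : E → Option Q)
    (herase : ∀ e : E, guard' e = guard e ∨ guard' e = none) :
    (∀ T : Q → ℝ≥0∞, Fop qhat src tgt w guard' T ≤ Fop qhat src tgt w guard T) ∧
    (∀ T T' : Q → ℝ≥0∞,
      IsLeast { S | Fop qhat src tgt w guard S = S } T →
      IsLeast { S | Fop qhat src tgt w guard' S = S } T' → T' ≤ T) ∧
    (∀ T T' : Q → ℝ≥0∞,
      IsGreatest { S | Fop qhat src tgt w guard S = S } T →
      IsGreatest { S | Fop qhat src tgt w guard' S = S } T' → T' ≤ T) := by
  have hle := Fop_le_of_erase qhat src tgt w herase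
  refine ⟨hle, fun T T' hT hT' => ?_, fun T T' hT hT' => ?_⟩
  · exact hT'.le_of_map_le (Fop_mono qhat src tgt w guard') ((hle T).trans hT.1.le)
  · exact hT.le_of_le_map (Fop_mono qhat src tgt w guard) (hT'.1.ge.trans (hle T'))

theorem stmt_10 {Q E : Type*} [Fintype Q] [Fintype E] [DecidableEq Q]
    (qhat : Q) (src tgt : E → Q) (w : E → NNReal)
    (guard guard' : E → Option Q)
    (herase : ∀ e : E, guard' e = guard e ∨ guard' e = none) :
    (∀ T : Q → ℝ≥0∞, Fop qhat src tgt w guard' T ≤ Fop qhat src tgt w guard T) ∧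
    (∀ T T' : Q → ℝ≥0∞,
      IsLeast { S | Fop qhat src tgt w guard S = S } T →
      IsLeast { S | Fop qhat src tgt w guard' S = S } T' → T' ≤ T) ∧
    (∀ T T' : Q → ℝ≥0∞,
      IsGreatest { S | Fop qhat src tgt w guard S = S } T →
      IsGreatest { S | Fop qhat src tgt w guard' S = S } T' → T' ≤ T) :=
  stmt_10_general qhat src tgt w guard guard' herase
end

section
/- Let (Q, q̂, E) be a guarded weighted graph and T : Q → ℝ≥0∞ a fixed point of F. Let (e_1, …, e_m; t_1, …, t_m) be a T-feasible timed path to a location q, i.e., e_1, …, e_m is a path with src e_1 = q̂, tgt e_m = q, tgt e_i = src e_{i+1}, the crossing times satisfy t_1 ≥ w e_1, t_{i+1} ≥ t_i + w e_{i+1} for all i, and whenever guard e_i = some g then T g ≤ t_i (in particular T g < ∞). Then T q ≤ t_m, i.e., no feasible timed path can reach q strictly earlier than the fixed-point value at q. -/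
open scoped ENNReal

/-- A `T`-feasible timed path to `q`: a path `es` from `qhat` to `q` with
crossing times `ts` respecting edge weights and guard thresholds given by `T`. -/
def Feasible {Q E : Type*} (qhat : Q) (src tgt : E → Q) (w : E → NNReal)
    (guard : E → Option Q) (T : Q → ℝ≥0∞) (q : Q) (m : ℕ) (hm : 0 < m)
    (es : Fin m → E) (ts : Fin m → NNReal) : Prop :=
  src (es ⟨0, hm⟩) = qhat ∧
  tgt (es ⟨m - 1, Nat.sub_lt hm Nat.one_pos⟩) = q ∧
  (∀ i : ℕ, ∀ h : i + 1 < m, tgt (es ⟨i, by omega⟩) = src (es ⟨i + 1, h⟩)) ∧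
  w (es ⟨0, hm⟩) ≤ ts ⟨0, hm⟩ ∧
  (∀ i : ℕ, ∀ h : i + 1 < m, ts ⟨i, by omega⟩ + w (es ⟨i + 1, h⟩) ≤ ts ⟨i + 1, h⟩) ∧
  (∀ i : Fin m, ∀ g : Q, guard (es i) = some g → T g ≤ (ts i : ℝ≥0∞))

/-! Since `T ≤ F T`, every edge `e` gives `T (tgt e) ≤ max (T (src e) + w e) (θ_T e)`; along a
feasible path both terms are bounded by the crossing time, so induction on the path index
bounds `T` at each reached location by its crossing time. -/

section Soundness

variable {Q E : Type*} {qhat : Q} {src tgt : E → Q} {w : E → NNReal}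
  {guard : E → Option Q} {T : Q → ℝ≥0∞}

theorem theta_le_of_guard {e : E} {t : ℝ≥0∞} (h : ∀ g, guard e = some g → T g ≤ t) :
    theta guard T e ≤ t := by
  cases hg : guard e with
  | none => simp [theta, hg]
  | some g => simpa [theta, hg] using h g hg

variable [DecidableEq Q]

theorem Fop_apply_qhat : Fop qhat src tgt w guard T qhat = 0 := if_pos rfl

theorem Fop_le_of_tgt_eq (e : E) :
    Fop qhat src tgt w guard T (tgt e) ≤ max (T (src e) + w e) (theta guard T e) := by
  unfold Fop
  split_ifs
  · exact zero_le
  · exact iInf_le (fun e' : { e' : E // tgt e' = tgt e } =>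
      max (T (src e'.1) + w e'.1) (theta guard T e'.1)) ⟨e, rfl⟩

theorem le_of_le_Fop_of_edge (hT : T ≤ Fop qhat src tgt w guard T) {e : E} {s t : ℝ≥0∞}
    (hs : T (src e) ≤ s) (hst : s + w e ≤ t) (hθ : theta guard T e ≤ t) : T (tgt e) ≤ t :=
  calc T (tgt e) ≤ Fop qhat src tgt w guard T (tgt e) := hT _
    _ ≤ max (T (src e) + w e) (theta guard T e) := Fop_le_of_tgt_eq e
    _ ≤ t := max_le (le_trans (by gcongr) hst) hθ

theorem Feasible.le_ts (hT : T ≤ Fop qhat src tgt w guard T) {q : Q} {m : ℕ} {hm : 0 < m}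
    {es : Fin m → E} {ts : Fin m → NNReal} (hfeas : Feasible qhat src tgt w guard T q m hm es ts) :
    ∀ (i : ℕ) (hi : i < m), T (tgt (es ⟨i, hi⟩)) ≤ ts ⟨i, hi⟩ := by
  obtain ⟨hsrc, -, hchain, hw₀, hw, hguard⟩ := hfeas
  have hθ (i : Fin m) : theta guard T (es i) ≤ ts i := theta_le_of_guard (hguard i)
  intro i
  induction i with
  | zero =>
    intro hi
    have hqhat : T qhat = 0 := le_antisymm ((hT qhat).trans_eq Fop_apply_qhat) zero_le
    refine le_of_le_Fop_of_edge hT (s := 0) ?_ ?_ (hθ _)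
    · rw [hsrc, hqhat]
    · simpa using hw₀
  | succ n ih =>
    intro hi
    refine le_of_le_Fop_of_edge hT (s := ts ⟨n, by omega⟩) ?_ ?_ (hθ _)
    · rw [← hchain n hi]
      exact ih _
    · exact_mod_cast hw n hi

end Soundness

theorem stmt_11_general {Q E : Type*} [DecidableEq Q]
    (qhat : Q) (src tgt : E → Q) (w : E → NNReal) (guard : E → Option Q)
    (T : Q → ℝ≥0∞) (hT : Fop qhat src tgt w guard T = T)
    (q : Q) (m : ℕ) (hm : 0 < m) (es : Fin m → E) (ts : Fin m → NNReal)
    (hfeas : Feasible qhat src tgt w guard T q m hm es ts) :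
    T q ≤ (ts ⟨m - 1, Nat.sub_lt hm Nat.one_pos⟩ : ℝ≥0∞) := by
  rw [← hfeas.2.1]
  exact hfeas.le_ts hT.ge _ _

theorem stmt_11 {Q E : Type*} [Fintype Q] [Fintype E] [DecidableEq Q]
    (qhat : Q) (src tgt : E → Q) (w : E → NNReal) (guard : E → Option Q)
    (T : Q → ℝ≥0∞) (hT : Fop qhat src tgt w guard T = T)
    (q : Q) (m : ℕ) (hm : 0 < m) (es : Fin m → E) (ts : Fin m → NNReal)
    (hfeas : Feasible qhat src tgt w guard T q m hm es ts) :
    T q ≤ (ts ⟨m - 1, Nat.sub_lt hm Nat.one_pos⟩ : ℝ≥0∞) :=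
  stmt_11_general qhat src tgt w guard T hT q m hm es ts hfeas
end

section
/- Let (Q, q̂, E) be a guarded weighted graph, let G ⊆ Q be the set of guard locations (those q for which some edge e has guard e = some q), and let g = card G. Let δ : ℝ≥0 and assume the restricted-distance hypothesis: for every subset S ⊆ G and every location q, if there exists a path from q̂ to q all of whose guarded edges have their guard in S, then there exists such a path of total weight at most δ. Let (T_n) be the staged sequence (T_0 = 0 at q̂ and ∞ elsewhere; T_{n+1} q = infimum of arrival times of T_n-feasible timed paths to q). Then for every n and every q, if T_n q < ∞ then T_n q ≤ δ · (g + 1). -/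
open scoped ENNReal

/-- The staged sequence `T_n` of guard-unlocking reachability times. -/
noncomputable def staged {Q E : Type*} [DecidableEq Q] (qhat : Q) (src tgt : E → Q)
    (w : E → NNReal) (guard : E → Option Q) : ℕ → Q → ℝ≥0∞
  | 0 => fun q => if q = qhat then 0 else ⊤
  | n + 1 => fun q => if q = qhat then 0 else
      ⨅ (m : ℕ) (hm : 0 < m) (es : Fin m → E) (ts : Fin m → NNReal)
        (_ : Feasible qhat src tgt w guard (staged qhat src tgt w guard n) q m hm es ts),
        (ts ⟨m - 1, Nat.sub_lt hm Nat.one_pos⟩ : ℝ≥0∞)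

/-- `PathTo qhat src tgt q es` : `es` is a finite edge path from `qhat` to `q`. -/
inductive PathTo {Q E : Type*} (qhat : Q) (src tgt : E → Q) : Q → List E → Prop
  | nil : PathTo qhat src tgt qhat []
  | cons {q : Q} {es : List E} (e : E) :
      PathTo qhat src tgt q es → src e = q → PathTo qhat src tgt (tgt e) (es ++ [e])

/-!
Call a guard location *unlocked* at stage `n` when `T_n` is finite there, and let `U_n` be the
set of these. Every `g ∈ U_n` satisfies `T_n g ≤ δ·|U_n|`. Indeed, a guard first unlocked at
stage `n + 1` is reachable by a path whose guards all lie in `U_n`, and by the restricted-distance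
hypothesis by such a path of weight at most `δ`; waiting at `q̂` until every guard of `U_n` is open
(time `δ·|U_n|`) and then traversing that path without pause gives
`T_{n+1} g ≤ δ·(|U_n| + 1) ≤ δ·|U_{n+1}|`, because `U_n ⊊ U_{n+1}`. The same schedule bounds every
finite `T_{n+1} q` by `δ·(|U_n| + 1) ≤ δ·(g + 1)`.
-/

section

variable {Q E : Type*} {qhat : Q} {src tgt : E → Q} {w : E → NNReal} {guard : E → Option Q}

theorem pathTo_nil_iff {q : Q} : PathTo qhat src tgt q [] ↔ q = qhat := by
  refine ⟨fun h => ?_, fun h => h ▸ .nil⟩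
  generalize hl : ([] : List E) = l at h
  cases h with
  | nil => rfl
  | cons => simp at hl

theorem pathTo_append_singleton_iff {q : Q} {l : List E} {e : E} :
    PathTo qhat src tgt q (l ++ [e]) ↔ tgt e = q ∧ PathTo qhat src tgt (src e) l := by
  refine ⟨fun h => ?_, fun ⟨he, h⟩ => he ▸ h.cons e rfl⟩
  generalize hl : l ++ [e] = l' at h
  cases h with
  | nil => simp at hl
  | cons e' h hsrc =>
    obtain ⟨rfl, he⟩ := List.append_inj' hl rfl
    obtain rfl := List.singleton_inj.mp he
    exact ⟨rfl, hsrc ▸ h⟩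

theorem pathTo_ofFn_iff {q : Q} {k : ℕ} (es : Fin (k + 1) → E) :
    PathTo qhat src tgt q (List.ofFn es) ↔
      src (es 0) = qhat ∧ tgt (es (Fin.last k)) = q ∧
        ∀ i : Fin k, tgt (es i.castSucc) = src (es i.succ) := by
  induction k generalizing q with
  | zero =>
    rw [List.ofFn_succ, List.ofFn_zero, ← List.nil_append [es 0], pathTo_append_singleton_iff,
      pathTo_nil_iff]
    simp [and_comm]
  | succ k ih =>
    rw [List.ofFn_succ', List.concat_eq_append, pathTo_append_singleton_iff, ih,
      Fin.forall_fin_succ']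
    simp only [Fin.castSucc_zero, Fin.succ_last, Fin.succ_castSucc]
    tauto

theorem feasible_succ_iff {T : Q → ℝ≥0∞} {q : Q} {k : ℕ} (hm : 0 < k + 1)
    (es : Fin (k + 1) → E) (ts : Fin (k + 1) → NNReal) :
    Feasible qhat src tgt w guard T q (k + 1) hm es ts ↔
      PathTo qhat src tgt q (List.ofFn es) ∧ w (es 0) ≤ ts 0 ∧
        (∀ i : Fin k, ts i.castSucc + w (es i.succ) ≤ ts i.succ) ∧
        ∀ i g, guard (es i) = some g → T g ≤ ts i := by
  rw [pathTo_ofFn_iff]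
  unfold Feasible
  simp only [Fin.zero_eta, Nat.add_sub_cancel]
  constructor
  · rintro ⟨h0, hlast, hchain, hw0, hw, hg⟩
    exact ⟨⟨h0, hlast, fun i => hchain i (by omega)⟩, hw0, fun i => hw i (by omega), hg⟩
  · rintro ⟨⟨h0, hlast, hchain⟩, hw0, hw, hg⟩
    exact ⟨h0, hlast, fun i hi => hchain ⟨i, by omega⟩, hw0, fun i hi => hw ⟨i, by omega⟩, hg⟩

theorem Feasible.mono {T T' : Q → ℝ≥0∞} {q : Q} {m : ℕ} {hm : 0 < m} {es : Fin m → E}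
    {ts : Fin m → NNReal} (h : Feasible qhat src tgt w guard T q m hm es ts) (hT : T' ≤ T) :
    Feasible qhat src tgt w guard T' q m hm es ts :=
  let ⟨h0, hlast, hchain, hw0, hw, hg⟩ := h
  ⟨h0, hlast, hchain, hw0, hw, fun i g hi => (hT g).trans (hg i g hi)⟩

variable [DecidableEq Q]

local notation "𝒯" => staged qhat src tgt w guard

theorem staged_succ_apply (n : ℕ) (q : Q) :
    𝒯 (n + 1) q = if q = qhat then 0 else
      ⨅ (m : ℕ) (hm : 0 < m) (es : Fin m → E) (ts : Fin m → NNReal)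
        (_ : Feasible qhat src tgt w guard (𝒯 n) q m hm es ts),
        (ts ⟨m - 1, Nat.sub_lt hm Nat.one_pos⟩ : ℝ≥0∞) :=
  rfl

theorem staged_qhat (n : ℕ) : 𝒯 n qhat = 0 := by
  cases n <;> simp [staged]

theorem eq_of_staged_zero_lt_top {q : Q} (h : 𝒯 0 q < ⊤) : q = qhat := by
  by_contra hq
  simp [staged, hq] at h

theorem staged_succ_le_of_feasible {n m : ℕ} {q : Q} {hm : 0 < m} {es : Fin m → E}
    {ts : Fin m → NNReal} (h : Feasible qhat src tgt w guard (𝒯 n) q m hm es ts) :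
    𝒯 (n + 1) q ≤ ts ⟨m - 1, Nat.sub_lt hm Nat.one_pos⟩ := by
  rw [staged_succ_apply]
  split_ifs
  · exact zero_le
  · exact iInf_le_of_le m <| iInf_le_of_le hm <| iInf_le_of_le es <| iInf_le_of_le ts <| iInf_le _ h

theorem exists_feasible_of_staged_succ_lt_top {n : ℕ} {q : Q} (hq : q ≠ qhat)
    (h : 𝒯 (n + 1) q < ⊤) :
    ∃ m hm es ts, Feasible qhat src tgt w guard (𝒯 n) q m hm es ts := by
  simp only [staged_succ_apply, if_neg hq, iInf_lt_iff] at h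
  obtain ⟨m, hm, es, ts, h, -⟩ := h
  exact ⟨m, hm, es, ts, h⟩

theorem staged_succ_le (n : ℕ) : 𝒯 (n + 1) ≤ 𝒯 n := by
  intro q
  induction n generalizing q with
  | zero => by_cases hq : q = qhat <;> simp [staged, hq]
  | succ n ih =>
    rw [staged_succ_apply, staged_succ_apply]
    split_ifs
    · exact le_rfl
    · exact iInf_mono fun m => iInf_mono fun hm => iInf_mono fun es => iInf_mono fun ts =>
        iInf_mono' fun h => ⟨h.mono ih, le_rfl⟩

theorem staged_succ_le_of_pathTo_ofFn {n k : ℕ} {q : Q} (B : NNReal) {es : Fin (k + 1) → E}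
    (hp : PathTo qhat src tgt q (List.ofFn es))
    (hB : ∀ i g, guard (es i) = some g → 𝒯 n g ≤ B) :
    𝒯 (n + 1) q ≤ B + ∑ i, (w (es i) : ℝ≥0∞) := by
  let d : ℕ → NNReal := fun j => if h : j < k + 1 then w (es ⟨j, h⟩) else 0
  have hd (i : Fin (k + 1)) : d i = w (es i) := dif_pos i.2
  let ts : Fin (k + 1) → NNReal := fun i => B + ∑ j ∈ Finset.range (i + 1), d j
  have hfeas : Feasible qhat src tgt w guard (𝒯 n) q (k + 1) k.succ_pos es ts := by
    refine (feasible_succ_iff _ es ts).2 ⟨hp, ?_, fun i => ?_, fun i g hg => ?_⟩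
    · simpa [ts] using le_add_left (hd 0).ge
    · simpa [ts, Finset.sum_range_succ _ (i + 1), add_assoc] using (hd i.succ).ge
    · exact (hB i g hg).trans (by simp [ts])
  calc 𝒯 (n + 1) q ≤ ts (Fin.last k) := staged_succ_le_of_feasible hfeas
    _ = B + ∑ i, (w (es i) : ℝ≥0∞) := by
      simp only [ts, ← hd, Fin.sum_univ_eq_sum_range (fun j => (d j : ℝ≥0∞))]
      push_cast
      rfl

theorem staged_succ_le_of_pathTo {n : ℕ} {q : Q} {l : List E} (B : NNReal)
    (hp : PathTo qhat src tgt q l)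
    (hB : ∀ e ∈ l, ∀ g, guard e = some g → 𝒯 n g ≤ B) :
    𝒯 (n + 1) q ≤ B + (l.map fun e => (w e : ℝ≥0∞)).sum := by
  cases l with
  | nil => rw [pathTo_nil_iff.1 hp, staged_qhat]; exact zero_le
  | cons e l =>
    have := staged_succ_le_of_pathTo_ofFn (k := l.length) (es := (e :: l).get) B
      (by rwa [List.ofFn_get]) fun i g hg => hB _ (List.get_mem _ _) g hg
    rwa [← List.ofFn_get (e :: l), List.map_ofFn, List.sum_ofFn]

variable (qhat src tgt w guard)

def guardLocs : Set Q := {g | ∃ e, guard e = some g}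

def unlocked (n : ℕ) : Set Q := {g ∈ guardLocs guard | 𝒯 n g < ⊤}

def RestrictedDistance (δ : NNReal) : Prop :=
  ∀ S ⊆ guardLocs guard, ∀ q : Q,
    (∃ l, PathTo qhat src tgt q l ∧ ∀ e ∈ l, ∀ g, guard e = some g → g ∈ S) →
    ∃ l, PathTo qhat src tgt q l ∧ (∀ e ∈ l, ∀ g, guard e = some g → g ∈ S) ∧
      (l.map fun e => (w e : ℝ≥0∞)).sum ≤ δ

variable {qhat src tgt w guard}

local notation "𝒰" => unlocked qhat src tgt w guard

theorem exists_pathTo_of_staged_succ_lt_top {n : ℕ} {q : Q} (h : 𝒯 (n + 1) q < ⊤) :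
    ∃ l, PathTo qhat src tgt q l ∧ ∀ e ∈ l, ∀ g, guard e = some g → g ∈ 𝒰 n := by
  by_cases hq : q = qhat
  · exact ⟨[], hq ▸ .nil, by simp⟩
  obtain ⟨m, hm, es, ts, hfeas⟩ := exists_feasible_of_staged_succ_lt_top hq h
  obtain ⟨k, rfl⟩ := Nat.exists_eq_add_one_of_ne_zero hm.ne'
  obtain ⟨hp, -, -, hg⟩ := (feasible_succ_iff hm es ts).1 hfeas
  refine ⟨_, hp, fun e he g hge => ?_⟩
  obtain ⟨i, rfl⟩ := List.mem_ofFn.1 he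
  exact ⟨⟨es i, hge⟩, (hg i g hge).trans_lt ENNReal.coe_lt_top⟩

theorem staged_succ_le_add_of_restrictedDistance {δ B : NNReal}
    (hδ : RestrictedDistance qhat src tgt w guard δ) {n : ℕ} {q : Q}
    (hB : ∀ g ∈ 𝒰 n, 𝒯 n g ≤ B) (h : 𝒯 (n + 1) q < ⊤) :
    𝒯 (n + 1) q ≤ B + δ := by
  obtain ⟨l, hp, hl, hw⟩ := hδ _ (fun g hg => hg.1) q (exists_pathTo_of_staged_succ_lt_top h)
  calc 𝒯 (n + 1) q ≤ B + (l.map fun e => (w e : ℝ≥0∞)).sum :=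
        staged_succ_le_of_pathTo B hp fun e he g hg => hB g (hl e he g hg)
    _ ≤ B + δ := by gcongr

theorem staged_le_mul_ncard_unlocked [Finite Q] {δ : NNReal}
    (hδ : RestrictedDistance qhat src tgt w guard δ) (n : ℕ) :
    ∀ g ∈ 𝒰 n, 𝒯 n g ≤ δ * (𝒰 n).ncard := by
  induction n with
  | zero =>
    rintro g ⟨-, hg⟩
    rw [eq_of_staged_zero_lt_top hg, staged_qhat]
    exact zero_le
  | succ n ih =>
    have hsub : 𝒰 n ⊆ 𝒰 (n + 1) := fun g hg => ⟨hg.1, (staged_succ_le n g).trans_lt hg.2⟩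
    intro g hg
    by_cases hgn : g ∈ 𝒰 n
    · calc 𝒯 (n + 1) g ≤ 𝒯 n g := staged_succ_le n g
        _ ≤ δ * (𝒰 n).ncard := ih g hgn
        _ ≤ δ * (𝒰 (n + 1)).ncard := by
            gcongr
            exact Set.toFinite _
    · have hcard : (𝒰 n).ncard + 1 ≤ (𝒰 (n + 1)).ncard :=
        Set.ncard_lt_ncard ⟨hsub, fun h => hgn (h hg)⟩
      calc 𝒯 (n + 1) g ≤ (δ * (𝒰 n).ncard : NNReal) + δ :=
            staged_succ_le_add_of_restrictedDistance hδ
              (fun g' hg' => by push_cast; exact ih g' hg') hg.2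
        _ = δ * ((𝒰 n).ncard + 1 : ℕ) := by push_cast; ring
        _ ≤ δ * (𝒰 (n + 1)).ncard := by gcongr

end

theorem stmt_13_general {Q E : Type*} [Fintype Q] [DecidableEq Q]
    (qhat : Q) (src tgt : E → Q) (w : E → NNReal) (guard : E → Option Q)
    (δ : NNReal)
    -- restricted-distance hypothesis: whenever `q` is reachable using only guards in
    -- `S ⊆ G`, it is so reachable by a path of total weight at most `δ`
    (hrestr : ∀ S : Set Q, S ⊆ { g : Q | ∃ e : E, guard e = some g } →
      ∀ q : Q,
      (∃ es : List E, PathTo qhat src tgt q es ∧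
        ∀ e ∈ es, ∀ g : Q, guard e = some g → g ∈ S) →
      (∃ es : List E, PathTo qhat src tgt q es ∧
        (∀ e ∈ es, ∀ g : Q, guard e = some g → g ∈ S) ∧
        ((es.map fun e => (w e : ℝ≥0∞)).sum ≤ (δ : ℝ≥0∞)))) :
    ∀ (n : ℕ) (q : Q), staged qhat src tgt w guard n q < ⊤ →
      staged qhat src tgt w guard n q ≤
        (δ : ℝ≥0∞) * ((Nat.card { g : Q // ∃ e : E, guard e = some g } : ℝ≥0∞) + 1) := by
  have hδ : RestrictedDistance qhat src tgt w guard δ := hrestr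
  rintro (_ | n) q hq
  · rw [eq_of_staged_zero_lt_top hq, staged_qhat]
    exact zero_le
  have hcard : (unlocked qhat src tgt w guard n).ncard ≤
      Nat.card { g : Q // ∃ e : E, guard e = some g } :=
    Set.ncard_le_ncard (t := guardLocs guard) (fun g hg => hg.1)
  calc staged qhat src tgt w guard (n + 1) q
      ≤ (δ * (unlocked qhat src tgt w guard n).ncard : NNReal) + δ :=
        staged_succ_le_add_of_restrictedDistance hδ
          (fun g hg => by push_cast; exact staged_le_mul_ncard_unlocked hδ n g hg) hq
    _ = δ * ((unlocked qhat src tgt w guard n).ncard + 1) := by push_cast; ring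
    _ ≤ _ := by gcongr

theorem stmt_13 {Q E : Type*} [Fintype Q] [Fintype E] [DecidableEq Q]
    (qhat : Q) (src tgt : E → Q) (w : E → NNReal) (guard : E → Option Q)
    (δ : NNReal)
    -- restricted-distance hypothesis: whenever `q` is reachable using only guards in
    -- `S ⊆ G`, it is so reachable by a path of total weight at most `δ`
    (hrestr : ∀ S : Set Q, S ⊆ { g : Q | ∃ e : E, guard e = some g } →
      ∀ q : Q,
      (∃ es : List E, PathTo qhat src tgt q es ∧
        ∀ e ∈ es, ∀ g : Q, guard e = some g → g ∈ S) →
      (∃ es : List E, PathTo qhat src tgt q es ∧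
        (∀ e ∈ es, ∀ g : Q, guard e = some g → g ∈ S) ∧
        ((es.map fun e => (w e : ℝ≥0∞)).sum ≤ (δ : ℝ≥0∞)))) :
    ∀ (n : ℕ) (q : Q), staged qhat src tgt w guard n q < ⊤ →
      staged qhat src tgt w guard n q ≤
        (δ : ℝ≥0∞) * ((Nat.card { g : Q // ∃ e : E, guard e = some g } : ℝ≥0∞) + 1) :=
  stmt_13_general qhat src tgt w guard δ hrestr
end
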